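/- Let (q₁,q₂,q₃,q₄,q₅) = (1,1,1,-1,-3). For every A ∈ SU(5) there exists h ∈ Sp2 such that Σ_{ℓ=1}^5 (|(Ah)_{ℓ2}|² + |(Ah)_{ℓ4}|²) q_ℓ = 0, where Ah denotes the matrix product. -/

import Mathlib

open Finset

noncomputable section

/-- SU(5): 5×5 special unitary complex matrices. -/
def SU5 : Set (Matrix (Fin 5) (Fin 5) ℂ) :=
  {A | A * A.conjTranspose = 1 ∧ A.det = 1}

/-- The image of the embedding Sp(2) ↪ SU(5). -/
def Sp2 : Set (Matrix (Fin 5) (Fin 5) ℂ) :=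
  {h | h ∈ SU5 ∧
    (∀ i : Fin 5, h i 4 = if i = 4 then 1 else 0) ∧
    (∀ i : Fin 5, h 4 i = if i = 4 then 1 else 0) ∧
    (∀ i j : Fin 5, i < 2 → j < 2 →
      h (i + 2) (j + 2) = (starRingEnd ℂ) (h i j) ∧
      h (i + 2) j = -(starRingEnd ℂ) (h i (j + 2)))}

/-
Write `jVec` for the quaternionic structure of `ℂ⁴ = ℍ²` (extended by `0` on the last
coordinate). The columns `1` and `3` of any `h ∈ Sp2` are `u` and `jVec u`, and conversely every
unit vector `u` with `u 4 = 0` is column `1` of some `h ∈ Sp2`: complete `u, jVec u` by a unit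
vector `c` orthogonal to both into the frame `c, u, jVec c, jVec u, e₄`. So the sum in question
is a continuous function `charge A u` of `u` alone, homogeneous of degree `2`.
As `A` and `jVec` are isometries, `‖A (jVec v)‖ = ‖A v‖`. Hence `charge A v ≤ 0` as soon as
`A v` is supported on the coordinates `3, 4`, and `0 ≤ charge A v` as soon as `A v` is supported
on `0, 1, 2` and `(A (jVec v)) 4 = 0`; either is a set of four linear conditions on `v ∈ ℂ⁵`, so
nonzero solutions exist. Since `ℂ⁴ ∖ {0}` is connected, `charge A` vanishes at some `v ≠ 0`, which
is then normalized.
-/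

open Matrix ComplexConjugate

lemma exists_ne_zero_forall_dotProduct_eq_zero {K : Type*} [Field K] {m n : ℕ} (hmn : m < n)
    (a : Fin m → Fin n → K) : ∃ v : Fin n → K, v ≠ 0 ∧ ∀ i, a i ⬝ᵥ v = 0 := by
  obtain ⟨v, hv, hv0⟩ := Submodule.exists_mem_ne_zero_of_ne_bot
    (LinearMap.ker_ne_bot_of_finrank_lt (f := (Matrix.of a).mulVecLin) (by simpa using hmn))
  exact ⟨v, hv0, fun i => congrFun hv i⟩

lemma exists_ne_zero_eq_zero_of_continuous {E : Type*} [AddCommGroup E] [Module ℝ E]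
    [TopologicalSpace E] [IsTopologicalAddGroup E] [ContinuousSMul ℝ E]
    (hE : 1 < Module.rank ℝ E) {f : E → ℝ} (hf : Continuous f) {x y : E} (hx : x ≠ 0)
    (hy : y ≠ 0) (hfx : f x ≤ 0) (hfy : 0 ≤ f y) : ∃ z ≠ 0, f z = 0 :=
  (isConnected_compl_singleton_of_one_lt_rank hE 0).isPreconnected.intermediate_value
    hx hy hf.continuousOn ⟨hfx, hfy⟩

lemma ofReal_sum_norm_sq {n : Type*} [Fintype n] (x : n → ℂ) :
    ((∑ i, ‖x i‖ ^ 2 : ℝ) : ℂ) = star x ⬝ᵥ x := by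
  simp [dotProduct, Complex.conj_mul']

lemma sum_norm_sq_mulVec {n : Type*} [Fintype n] [DecidableEq n] {B : Matrix n n ℂ}
    (hB : Bᴴ * B = 1) (x : n → ℂ) : ∑ i, ‖(B *ᵥ x) i‖ ^ 2 = ∑ i, ‖x i‖ ^ 2 := by
  apply Complex.ofReal_injective
  rw [ofReal_sum_norm_sq, ofReal_sum_norm_sq, star_mulVec, dotProduct_mulVec, vecMul_vecMul,
    hB, vecMul_one]

lemma exists_smul_star_dotProduct_self_eq_one {n : Type*} [Fintype n] {v : n → ℂ}
    (hv : v ≠ 0) : ∃ a : ℂ, star (a • v) ⬝ᵥ (a • v) = 1 := by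
  obtain ⟨i, hi⟩ := Function.ne_iff.mp hv
  have hs : 0 < ∑ i, ‖v i‖ ^ 2 :=
    Finset.sum_pos' (fun _ _ => by positivity) ⟨i, mem_univ _, pow_pos (norm_pos_iff.mpr hi) 2⟩
  refine ⟨((√(∑ i, ‖v i‖ ^ 2))⁻¹ : ℝ), ?_⟩
  rw [star_smul, smul_dotProduct, dotProduct_smul, ← ofReal_sum_norm_sq]
  simp only [Complex.star_def, Complex.conj_ofReal, smul_eq_mul, ← Complex.ofReal_mul]
  rw [← Complex.ofReal_one, Complex.ofReal_inj, ← mul_assoc, ← mul_inv, Real.mul_self_sqrt hs.le,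
    inv_mul_cancel₀ hs.ne']

def jVec (v : Fin 5 → ℂ) : Fin 5 → ℂ :=
  ![-conj (v 2), -conj (v 3), conj (v 0), conj (v 1), 0]

lemma jVec_smul (c : ℂ) (v : Fin 5 → ℂ) : jVec (c • v) = conj c • jVec v := by
  ext i; fin_cases i <;> simp [jVec, mul_comm]

lemma continuous_jVec : Continuous jVec := by
  refine continuous_pi fun i => ?_
  fin_cases i <;> simp only [jVec] <;> fun_prop

lemma sum_norm_sq_jVec {v : Fin 5 → ℂ} (hv : v 4 = 0) :
    ∑ i, ‖jVec v i‖ ^ 2 = ∑ i, ‖v i‖ ^ 2 := by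
  simp [Fin.sum_univ_five, jVec, hv]
  ring

lemma star_jVec_dotProduct_self (v : Fin 5 → ℂ) : star (jVec v) ⬝ᵥ v = 0 := by
  simp [jVec, dotProduct, Fin.sum_univ_five]; ring

lemma star_jVec_dotProduct_jVec {v w : Fin 5 → ℂ} (hv : v 4 = 0) :
    star (jVec v) ⬝ᵥ jVec w = star w ⬝ᵥ v := by
  simp [jVec, dotProduct, Fin.sum_univ_five, hv]; ring

lemma star_jVec_dotProduct_comm (v w : Fin 5 → ℂ) :
    star (jVec v) ⬝ᵥ w = -(star (jVec w) ⬝ᵥ v) := by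
  simp [jVec, dotProduct, Fin.sum_univ_five]; ring

@[simp]
lemma jVec_apply_four (v : Fin 5 → ℂ) : jVec v 4 = 0 := rfl

lemma star_dotProduct_jVec_self (v : Fin 5 → ℂ) : star v ⬝ᵥ jVec v = 0 := by
  rw [star_dotProduct, star_jVec_dotProduct_self, star_zero]

lemma mulVec_jVec_apply (A : Matrix (Fin 5) (Fin 5) ℂ) (v : Fin 5 → ℂ) (i : Fin 5) :
    (A *ᵥ jVec v) i = -star (star (jVec (star fun k => A i k)) ⬝ᵥ v) := by
  rw [← star_neg, ← star_jVec_dotProduct_comm, ← star_dotProduct, star_star]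
  rfl

def chargeWeight : Fin 5 → ℝ := ![1, 1, 1, -1, -3]

def weightedNormSq (x : Fin 5 → ℂ) : ℝ := ∑ ℓ, ‖x ℓ‖ ^ 2 * chargeWeight ℓ

def charge (A : Matrix (Fin 5) (Fin 5) ℂ) (v : Fin 5 → ℂ) : ℝ :=
  weightedNormSq (A *ᵥ v) + weightedNormSq (A *ᵥ jVec v)

lemma weightedNormSq_le (x : Fin 5 → ℂ) : weightedNormSq x ≤ ∑ ℓ, ‖x ℓ‖ ^ 2 := by
  simp [weightedNormSq, Fin.sum_univ_five, chargeWeight]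
  nlinarith [sq_nonneg ‖x 3‖, sq_nonneg ‖x 4‖]

lemma neg_le_weightedNormSq {x : Fin 5 → ℂ} (hx : x 4 = 0) :
    -∑ ℓ, ‖x ℓ‖ ^ 2 ≤ weightedNormSq x := by
  simp [weightedNormSq, Fin.sum_univ_five, chargeWeight, hx]
  nlinarith [sq_nonneg ‖x 0‖, sq_nonneg ‖x 1‖, sq_nonneg ‖x 2‖]

lemma weightedNormSq_le_neg {x : Fin 5 → ℂ} (h0 : x 0 = 0) (h1 : x 1 = 0) (h2 : x 2 = 0) :
    weightedNormSq x ≤ -∑ ℓ, ‖x ℓ‖ ^ 2 := by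
  simp [weightedNormSq, Fin.sum_univ_five, chargeWeight, h0, h1, h2]
  nlinarith [sq_nonneg ‖x 4‖]

lemma weightedNormSq_eq {x : Fin 5 → ℂ} (h3 : x 3 = 0) (h4 : x 4 = 0) :
    weightedNormSq x = ∑ ℓ, ‖x ℓ‖ ^ 2 := by
  simp [weightedNormSq, Fin.sum_univ_five, chargeWeight, h3, h4]

lemma charge_smul (A : Matrix (Fin 5) (Fin 5) ℂ) (c : ℂ) (v : Fin 5 → ℂ) :
    charge A (c • v) = ‖c‖ ^ 2 * charge A v := by
  simp only [charge, weightedNormSq, jVec_smul, mulVec_smul, Pi.smul_apply, smul_eq_mul,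
    norm_mul, Complex.norm_conj, mul_add, Finset.mul_sum]
  congr 1 <;> exact Finset.sum_congr rfl fun _ _ => by ring

lemma continuous_charge (A : Matrix (Fin 5) (Fin 5) ℂ) : Continuous (charge A) := by
  have hmulVec : Continuous (A *ᵥ ·) := (Matrix.mulVecLin A).continuous_of_finiteDimensional
  have hjVec := continuous_jVec
  unfold charge weightedNormSq
  fun_prop

section charge

variable {A : Matrix (Fin 5) (Fin 5) ℂ} (hA : Aᴴ * A = 1)
include hA

lemma sum_norm_sq_mulVec_jVec {v : Fin 5 → ℂ} (hv : v 4 = 0) :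
    ∑ ℓ, ‖(A *ᵥ jVec v) ℓ‖ ^ 2 = ∑ ℓ, ‖(A *ᵥ v) ℓ‖ ^ 2 := by
  rw [sum_norm_sq_mulVec hA, sum_norm_sq_mulVec hA, sum_norm_sq_jVec hv]

lemma charge_nonpos {v : Fin 5 → ℂ} (hv : v 4 = 0) (h0 : (A *ᵥ v) 0 = 0)
    (h1 : (A *ᵥ v) 1 = 0) (h2 : (A *ᵥ v) 2 = 0) : charge A v ≤ 0 := by
  have := weightedNormSq_le_neg h0 h1 h2
  have := weightedNormSq_le (A *ᵥ jVec v)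
  have := sum_norm_sq_mulVec_jVec hA hv
  unfold charge
  linarith

lemma charge_nonneg {v : Fin 5 → ℂ} (hv : v 4 = 0) (h3 : (A *ᵥ v) 3 = 0)
    (h4 : (A *ᵥ v) 4 = 0) (hj : (A *ᵥ jVec v) 4 = 0) : 0 ≤ charge A v := by
  have := weightedNormSq_eq h3 h4
  have := neg_le_weightedNormSq hj
  have := sum_norm_sq_mulVec_jVec hA hv
  unfold charge
  linarith

lemma exists_charge_nonpos : ∃ v ≠ 0, v 4 = 0 ∧ charge A v ≤ 0 := by
  obtain ⟨v, hv0, hv⟩ := exists_ne_zero_forall_dotProduct_eq_zero (show 4 < 5 by norm_num)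
    ![Pi.single 4 1, A 0, A 1, A 2]
  have h4 : v 4 = 0 := by simpa using hv 0
  exact ⟨v, hv0, h4, charge_nonpos hA h4 (hv 1) (hv 2) (hv 3)⟩

lemma exists_charge_nonneg : ∃ v ≠ 0, v 4 = 0 ∧ 0 ≤ charge A v := by
  obtain ⟨v, hv0, hv⟩ := exists_ne_zero_forall_dotProduct_eq_zero (show 4 < 5 by norm_num)
    ![Pi.single 4 1, A 3, A 4, star (jVec (star fun k => A 4 k))]
  have h4 : v 4 = 0 := by simpa using hv 0
  have hj : (A *ᵥ jVec v) 4 = 0 := by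
    have h3 : star (jVec (star fun k => A 4 k)) ⬝ᵥ v = 0 := hv 3
    rw [mulVec_jVec_apply, h3, star_zero, neg_zero]
  exact ⟨v, hv0, h4, charge_nonneg hA h4 (hv 1) (hv 2) hj⟩

lemma exists_charge_eq_zero : ∃ v ≠ 0, v 4 = 0 ∧ charge A v = 0 := by
  obtain ⟨x, hx0, hx4, hx⟩ := exists_charge_nonpos hA
  obtain ⟨y, hy0, hy4, hy⟩ := exists_charge_nonneg hA
  let ι : (Fin 4 → ℂ) → Fin 5 → ℂ := fun w => ![w 0, w 1, w 2, w 3, 0]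
  let ρ : (Fin 5 → ℂ) → Fin 4 → ℂ := fun v => ![v 0, v 1, v 2, v 3]
  have hρι : ∀ w, ρ (ι w) = w := fun w => by ext i; fin_cases i <;> rfl
  have hιρ : ∀ v : Fin 5 → ℂ, v 4 = 0 → ι (ρ v) = v := fun v hv => by
    ext i; fin_cases i <;> simp [ι, ρ, hv]
  have hρ0 : ∀ v : Fin 5 → ℂ, v 4 = 0 → v ≠ 0 → ρ v ≠ 0 := fun v hv hv0 h => by
    apply hv0; rw [← hιρ v hv, h]; ext i; fin_cases i <;> rfl
  have hrank : 1 < Module.rank ℝ (Fin 4 → ℂ) :=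
    Module.one_lt_rank_of_one_lt_finrank (by simp [Module.finrank_pi_fintype])
  obtain ⟨w, hw0, hw⟩ := exists_ne_zero_eq_zero_of_continuous hrank
    ((continuous_charge A).comp (by fun_prop : Continuous ι)) (hρ0 x hx4 hx0) (hρ0 y hy4 hy0)
    (by simpa [hιρ x hx4] using hx) (by simpa [hιρ y hy4] using hy)
  refine ⟨ι w, fun h => hw0 ?_, rfl, hw⟩
  rw [← hρι w, h]; ext i; fin_cases i <;> rfl

end charge

def quatFrameCols (c u : Fin 5 → ℂ) : Fin 5 → Fin 5 → ℂ :=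
  ![c, u, jVec c, jVec u, Pi.single 4 1]

def quatFrame (c u : Fin 5 → ℂ) : Matrix (Fin 5) (Fin 5) ℂ :=
  (Matrix.of (quatFrameCols c u))ᵀ

-- The Study determinant of the quaternionic frame.
lemma det_quatFrame {c u : Fin 5 → ℂ} (hc : c 4 = 0) (hu : u 4 = 0) :
    (quatFrame c u).det = (star c ⬝ᵥ c) * (star u ⬝ᵥ u) - (star c ⬝ᵥ u) * (star u ⬝ᵥ c)
      - star (star (jVec u) ⬝ᵥ c) * (star (jVec u) ⬝ᵥ c) := by
  rw [quatFrame, det_transpose, quatFrameCols]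
  simp [det_succ_row_zero, Fin.sum_univ_succ, Fin.succAbove, hc, hu, jVec, dotProduct]
  ring

lemma conjTranspose_quatFrame_mul_self {c u : Fin 5 → ℂ} (hc4 : c 4 = 0) (hu4 : u 4 = 0)
    (hc : star c ⬝ᵥ c = 1) (hu : star u ⬝ᵥ u = 1) (hcu : star c ⬝ᵥ u = 0)
    (hjuc : star (jVec u) ⬝ᵥ c = 0) : (quatFrame c u)ᴴ * quatFrame c u = 1 := by
  have huc : star u ⬝ᵥ c = 0 := by rw [star_dotProduct, hcu, star_zero]
  have hcju : star c ⬝ᵥ jVec u = 0 := by rw [star_dotProduct, hjuc, star_zero]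
  have hjcu : star (jVec c) ⬝ᵥ u = 0 := by rw [star_jVec_dotProduct_comm, hjuc, neg_zero]
  have hujc : star u ⬝ᵥ jVec c = 0 := by rw [star_dotProduct, hjcu, star_zero]
  ext j k
  change star (quatFrameCols c u j) ⬝ᵥ quatFrameCols c u k = _
  fin_cases j <;> fin_cases k <;>
    simp [quatFrameCols, star_jVec_dotProduct_jVec, star_jVec_dotProduct_self,
      star_dotProduct_jVec_self, hc4, hu4, hc, hu, hcu, huc, hcju, hjuc, hjcu, hujc]

lemma quatFrame_mem_Sp2 {c u : Fin 5 → ℂ} (hc4 : c 4 = 0) (hu4 : u 4 = 0)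
    (hc : star c ⬝ᵥ c = 1) (hu : star u ⬝ᵥ u = 1) (hcu : star c ⬝ᵥ u = 0)
    (hjuc : star (jVec u) ⬝ᵥ c = 0) : quatFrame c u ∈ Sp2 := by
  have huc : star u ⬝ᵥ c = 0 := by rw [star_dotProduct, hcu, star_zero]
  refine ⟨⟨mul_eq_one_comm.mp (conjTranspose_quatFrame_mul_self hc4 hu4 hc hu hcu hjuc), ?_⟩,
    fun i => ?_, fun i => ?_, fun i j hi hj => ?_⟩
  · rw [det_quatFrame hc4 hu4, hc, hu, hcu, huc, hjuc]; simp
  · simp [quatFrame, quatFrameCols, Pi.single_apply]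
  · fin_cases i <;> simp [quatFrame, quatFrameCols, hc4, hu4]
  · fin_cases i <;> fin_cases j <;> simp_all [quatFrame, quatFrameCols, jVec]

lemma exists_mem_Sp2_cols_eq {u : Fin 5 → ℂ} (hu4 : u 4 = 0) (hu : star u ⬝ᵥ u = 1) :
    ∃ h ∈ Sp2, (fun k => h k 1) = u ∧ (fun k => h k 3) = jVec u := by
  obtain ⟨c, hc0, hc⟩ := exists_ne_zero_forall_dotProduct_eq_zero (show 3 < 5 by norm_num)
    ![Pi.single 4 1, star u, star (jVec u)]
  obtain ⟨a, ha⟩ := exists_smul_star_dotProduct_self_eq_one hc0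
  have hc4 : (a • c) 4 = 0 := by simpa using congrArg (a * ·) (hc 0)
  have huc : star u ⬝ᵥ c = 0 := hc 1
  have hjuc : star (jVec u) ⬝ᵥ c = 0 := hc 2
  have hcu : star (a • c) ⬝ᵥ u = 0 := by
    rw [star_dotProduct, dotProduct_smul, huc, smul_zero, star_zero]
  have hjuac : star (jVec u) ⬝ᵥ (a • c) = 0 := by rw [dotProduct_smul, hjuc, smul_zero]
  exact ⟨quatFrame (a • c) u, quatFrame_mem_Sp2 hc4 hu4 ha hu hcu hjuac, rfl, rfl⟩

theorem stmt4 (A : Matrix (Fin 5) (Fin 5) ℂ) (hA : A ∈ SU5) :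
    ∃ h ∈ Sp2,
      ∑ ℓ : Fin 5, (‖(A * h) ℓ 1‖ ^ 2 + ‖(A * h) ℓ 3‖ ^ 2) *
        (((![1, 1, 1, -1, -3] : Fin 5 → ℤ) ℓ : ℤ) : ℝ) = 0 := by
  have hA' : Aᴴ * A = 1 := mul_eq_one_comm.mp hA.1
  obtain ⟨v, hv0, hv4, hv⟩ := exists_charge_eq_zero hA'
  obtain ⟨a, ha⟩ := exists_smul_star_dotProduct_self_eq_one hv0
  obtain ⟨h, hSp2, h1, h3⟩ := exists_mem_Sp2_cols_eq (by simp [hv4]) ha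
  refine ⟨h, hSp2, ?_⟩
  have hcol : ∀ ℓ j, (A * h) ℓ j = (A *ᵥ fun k => h k j) ℓ := fun _ _ => rfl
  calc _ = charge A (a • v) := by
        simp only [charge, weightedNormSq, hcol, h1, h3, ← Finset.sum_add_distrib, add_mul]
        refine Finset.sum_congr rfl fun ℓ _ => ?_
        fin_cases ℓ <;> simp [chargeWeight]
    _ = 0 := by rw [charge_smul, hv, mul_zero]
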